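/- There is a constant C > 0 such that for all N ∈ ℕ, all β ∈ [1/2, 1], and all ξ ∈ [−1/2, 1/2], one has |M̂_N^β(ξ) − M̂_{2N}^β(ξ)| ≤ C ( min{(N|ξ|)⁻¹, N|ξ|} + (1−β) N^{β−1} ) (with the convention that (N|ξ|)⁻¹ = ∞ when ξ = 0). -/

import Mathlib

/-!
Write `a n = (n ^ β - (n - 1) ^ β) / β`: by concavity of `x ↦ x ^ β` this is a nonnegative,
nonincreasing sequence with `a 1 = 1 / β ≤ 2` and `∑_{n ≤ N} a n = N ^ β / β`.
If `N|ξ| ≤ 1`, compare each multiplier with its value at `ξ = 0`: since `|e^{2πiξn} - 1| ≤ 2π|ξ|N`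
this costs `O(N|ξ|)`, while `M̂_N(0) - M̂_{2N}(0) = N^{β-1} (1 - 2^{β-1}) / β = O((1 - β) N^{β-1})`.
If `N|ξ| > 1`, summation by parts against the geometric sums `|∑_{k ≤ m} e^{2πiξk}| ≤ 1 / (2|ξ|)`
bounds `|M̂_N(ξ)|` and `|M̂_{2N}(ξ)|` by `(N|ξ|)⁻¹` separately.
-/

open scoped BigOperators

/-- The multiplier `M̂_N^β(ξ) = (1/N) Σ_{n=1}^N ((n^β − (n−1)^β)/β) e^{2πi ξ n}`. -/
noncomputable def Mhat (β : ℝ) (N : ℕ) (ξ : ℝ) : ℂ :=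
  ((N : ℂ))⁻¹ * ∑ n ∈ Finset.Icc 1 N,
    (((((n : ℝ) ^ β - ((n : ℝ) - 1) ^ β) / β) : ℝ) : ℂ) *
      Complex.exp (2 * Real.pi * Complex.I * ξ * n)

open Real Finset

theorem norm_sum_range_smul_le_of_antitone {E : Type*} [SeminormedAddCommGroup E]
    [NormedSpace ℝ E] {f : ℕ → ℝ} {z : ℕ → E} {b : ℝ} (hf : Antitone f) (hf0 : ∀ i, 0 ≤ f i)
    (hzb : ∀ m, ‖∑ i ∈ range m, z i‖ ≤ b) (n : ℕ) :
    ‖∑ i ∈ range n, f i • z i‖ ≤ f 0 * b := by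
  rw [sum_range_by_parts]
  have hstep : ∀ i ∈ range (n - 1),
      ‖(f (i + 1) - f i) • ∑ j ∈ range (i + 1), z j‖ ≤ (f i - f (i + 1)) * b := by
    intro i _
    rw [norm_smul, Real.norm_eq_abs, abs_of_nonpos (sub_nonpos.2 (hf i.le_succ)), neg_sub]
    exact mul_le_mul_of_nonneg_left (hzb _) (sub_nonneg.2 (hf i.le_succ))
  calc _ ≤ f (n - 1) * b + ∑ i ∈ range (n - 1), (f i - f (i + 1)) * b := by
        refine (norm_sub_le _ _).trans (add_le_add ?_ ((norm_sum_le _ _).trans (sum_le_sum hstep)))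
        rw [norm_smul, Real.norm_eq_abs, abs_of_nonneg (hf0 _)]
        exact mul_le_mul_of_nonneg_left (hzb n) (hf0 _)
    _ = f 0 * b := by rw [← sum_mul, sum_range_sub']; ring

theorem norm_geom_sum_le {K : Type*} [NormedField K] {z : K} (hz : ‖z‖ ≤ 1) (hz1 : z ≠ 1)
    (m : ℕ) : ‖∑ k ∈ range m, z ^ k‖ ≤ 2 / ‖z - 1‖ := by
  rw [geom_sum_eq hz1, norm_div]
  gcongr
  calc ‖z ^ m - 1‖ ≤ ‖z‖ ^ m + ‖(1 : K)‖ := by rw [← norm_pow]; exact norm_sub_le _ _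
    _ ≤ 2 := by rw [norm_one]; linarith [pow_le_one₀ (norm_nonneg z) hz (n := m)]

theorem four_mul_abs_le_norm_exp_two_pi_I_mul_sub_one {ξ : ℝ} (hξ : |ξ| ≤ 1 / 2) :
    4 * |ξ| ≤ ‖Complex.exp (2 * π * Complex.I * ξ) - 1‖ := by
  have hsin := mul_abs_le_abs_sin (x := π * ξ) (by
    rw [abs_mul, abs_of_pos pi_pos]; nlinarith [pi_pos])
  rw [show 2 * (π : ℂ) * Complex.I * ξ = Complex.I * ((2 * π * ξ : ℝ) : ℂ) by push_cast; ring,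
    Complex.norm_exp_I_mul_ofReal_sub_one, norm_mul, Real.norm_eq_abs, Real.norm_eq_abs,
    show 2 * π * ξ / 2 = π * ξ by ring, abs_two]
  rw [abs_mul, abs_of_pos pi_pos, ← mul_assoc, div_mul_cancel₀ _ pi_pos.ne'] at hsin
  linarith

theorem one_add_le_two_rpow {t : ℝ} (ht : t ≤ 0) : 1 + t ≤ (2 : ℝ) ^ t := by
  rw [rpow_def_of_pos two_pos]
  have hlog : log 2 ≤ 1 := by linarith [log_two_lt_d9]
  nlinarith [add_one_le_exp (log 2 * t)]

theorem sum_Icc_one_eq_sum_range {M : Type*} [AddCommMonoid M] (f : ℕ → M) (N : ℕ) :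
    ∑ n ∈ Icc 1 N, f n = ∑ i ∈ range N, f (i + 1) := by
  induction N with
  | zero => simp
  | succ N ih => rw [sum_Icc_succ_top (by omega), ih, sum_range_succ]

theorem norm_exp_two_pi_I_mul (ξ : ℝ) : ‖Complex.exp (2 * π * Complex.I * ξ)‖ = 1 := by
  rw [show 2 * (π : ℂ) * Complex.I * ξ = ((2 * π * ξ : ℝ) : ℂ) * Complex.I by push_cast; ring,
    Complex.norm_exp_ofReal_mul_I]

theorem norm_sum_range_exp_two_pi_I_mul_pow_succ_le {ξ : ℝ} (hξ0 : ξ ≠ 0) (hξ : |ξ| ≤ 1 / 2)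
    (m : ℕ) : ‖∑ i ∈ range m, Complex.exp (2 * π * Complex.I * ξ) ^ (i + 1)‖ ≤ (2 * |ξ|)⁻¹ := by
  have hξpos : 0 < |ξ| := abs_pos.2 hξ0
  have hz := four_mul_abs_le_norm_exp_two_pi_I_mul_sub_one hξ
  have hz1 : Complex.exp (2 * π * Complex.I * ξ) ≠ 1 := fun h => by
    rw [h, sub_self, norm_zero] at hz; linarith
  simp_rw [pow_succ', ← mul_sum, norm_mul, norm_exp_two_pi_I_mul, one_mul]
  calc _ ≤ 2 / ‖Complex.exp (2 * π * Complex.I * ξ) - 1‖ :=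
        norm_geom_sum_le (norm_exp_two_pi_I_mul ξ).le hz1 m
    _ ≤ 2 / (4 * |ξ|) := by gcongr
    _ = (2 * |ξ|)⁻¹ := by field_simp; ring

noncomputable def rpowIncrement (β : ℝ) (n : ℕ) : ℝ := ((n : ℝ) ^ β - ((n : ℝ) - 1) ^ β) / β

theorem rpowIncrement_nonneg {β : ℝ} (hβ : 0 ≤ β) {n : ℕ} (hn : 1 ≤ n) :
    0 ≤ rpowIncrement β n := by
  have hn' : (1 : ℝ) ≤ n := by exact_mod_cast hn
  exact div_nonneg (sub_nonneg.2 (rpow_le_rpow (by linarith) (by linarith) hβ)) hβ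

theorem antitone_rpowIncrement_succ {β : ℝ} (hβ0 : 0 ≤ β) (hβ1 : β ≤ 1) :
    Antitone fun i : ℕ => rpowIncrement β (i + 1) := by
  refine antitone_nat_of_succ_le fun i => div_le_div_of_nonneg_right ?_ hβ0
  have hconc := (concaveOn_rpow hβ0 hβ1).2 (Set.mem_Ici.2 (Nat.cast_nonneg i))
    (Set.mem_Ici.2 (by positivity : (0 : ℝ) ≤ i + 2)) (by norm_num : (0 : ℝ) ≤ 1 / 2)
    (by norm_num : (0 : ℝ) ≤ 1 / 2) (by norm_num)
  simp only [smul_eq_mul, show (1 / 2 : ℝ) * i + 1 / 2 * (i + 2) = i + 1 by ring] at hconc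
  push_cast
  ring_nf at hconc ⊢
  linarith

theorem rpowIncrement_one {β : ℝ} (hβ : β ≠ 0) : rpowIncrement β 1 = β⁻¹ := by
  simp [rpowIncrement, zero_rpow hβ]

theorem sum_rpowIncrement {β : ℝ} (hβ : β ≠ 0) (N : ℕ) :
    ∑ n ∈ Icc 1 N, rpowIncrement β n = (N : ℝ) ^ β / β := by
  induction N with
  | zero => simp [zero_rpow hβ]
  | succ N ih =>
    rw [sum_Icc_succ_top (by omega), ih, rpowIncrement]
    push_cast
    ring_nf

theorem Mhat_eq_sum_rpowIncrement (β : ℝ) (N : ℕ) (ξ : ℝ) :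
    Mhat β N ξ = (N : ℂ)⁻¹ * ∑ n ∈ Icc 1 N,
      (rpowIncrement β n : ℂ) * Complex.exp (2 * π * Complex.I * ξ * n) :=
  rfl

theorem Mhat_eq_sum_range (β : ℝ) (N : ℕ) (ξ : ℝ) :
    Mhat β N ξ = (N : ℂ)⁻¹ * ∑ i ∈ range N,
      rpowIncrement β (i + 1) • Complex.exp (2 * π * Complex.I * ξ) ^ (i + 1) := by
  rw [Mhat_eq_sum_rpowIncrement, sum_Icc_one_eq_sum_range]
  congr 1
  refine sum_congr rfl fun i _ => ?_
  rw [Complex.real_smul, ← Complex.exp_nat_mul]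
  push_cast
  ring_nf

theorem norm_Mhat_le {β : ℝ} (hβ : 1 / 2 ≤ β) (hβ1 : β ≤ 1) {ξ : ℝ} (hξ0 : ξ ≠ 0)
    (hξ : |ξ| ≤ 1 / 2) (N : ℕ) : ‖Mhat β N ξ‖ ≤ ((N : ℝ) * |ξ|)⁻¹ := by
  have hβ0 : 0 < β := by linarith
  have habel := norm_sum_range_smul_le_of_antitone (antitone_rpowIncrement_succ hβ0.le hβ1)
    (fun i => rpowIncrement_nonneg hβ0.le (Nat.le_add_left 1 i))
    (norm_sum_range_exp_two_pi_I_mul_pow_succ_le hξ0 hξ) N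
  rw [zero_add, rpowIncrement_one hβ0.ne'] at habel
  have hβinv : β⁻¹ ≤ 2 := by rw [inv_le_comm₀ hβ0 two_pos]; linarith
  rw [Mhat_eq_sum_range, norm_mul, norm_inv, Complex.norm_natCast, mul_inv]
  gcongr
  calc _ ≤ β⁻¹ * (2 * |ξ|)⁻¹ := habel
    _ ≤ 2 * (2 * |ξ|)⁻¹ := by gcongr
    _ = |ξ|⁻¹ := by field_simp

theorem Mhat_zero {β : ℝ} (hβ : β ≠ 0) {N : ℕ} (hN : N ≠ 0) :
    Mhat β N 0 = (((N : ℝ) ^ (β - 1) / β : ℝ) : ℂ) := by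
  have hN' : (N : ℝ) ≠ 0 := Nat.cast_ne_zero.2 hN
  simp only [Mhat_eq_sum_rpowIncrement, Complex.ofReal_zero, mul_zero, zero_mul,
    Complex.exp_zero, mul_one]
  rw [← Complex.ofReal_sum, sum_rpowIncrement hβ, rpow_sub_one hN']
  push_cast
  ring

theorem norm_Mhat_sub_Mhat_zero_le {β : ℝ} (hβ : 1 / 2 ≤ β) (hβ1 : β ≤ 1) (N : ℕ) (ξ : ℝ) :
    ‖Mhat β N ξ - Mhat β N 0‖ ≤ 4 * π * (N * |ξ|) := by
  have hβ0 : 0 < β := by linarith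
  rcases Nat.eq_zero_or_pos N with rfl | hN
  · simp [Mhat]
  have hterm : ∀ n ∈ Icc 1 N, ‖(rpowIncrement β n : ℂ) * Complex.exp (2 * π * Complex.I * ξ * n)
      - rpowIncrement β n‖ ≤ rpowIncrement β n * (2 * π * |ξ| * N) := by
    intro n hn
    obtain ⟨hn1, hnN⟩ := mem_Icc.1 hn
    have ha := rpowIncrement_nonneg hβ0.le hn1
    rw [← mul_sub_one, norm_mul, Complex.norm_real, Real.norm_eq_abs, abs_of_nonneg ha]
    gcongr
    rw [show 2 * (π : ℂ) * Complex.I * ξ * n = Complex.I * ((2 * π * ξ * n : ℝ) : ℂ) by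
      push_cast; ring]
    refine norm_exp_I_mul_ofReal_sub_one_le.trans ?_
    rw [Real.norm_eq_abs, abs_mul, abs_mul, abs_mul, abs_of_pos pi_pos, abs_two, Nat.abs_cast]
    gcongr
  have hNβ : (N : ℝ) ^ β / β ≤ 2 * N := by
    rw [div_le_iff₀ hβ0]
    nlinarith [rpow_le_self_of_one_le (Nat.one_le_cast.2 hN) hβ1]
  rw [Mhat_eq_sum_rpowIncrement, Mhat_eq_sum_rpowIncrement]
  simp only [Complex.ofReal_zero, mul_zero, zero_mul, Complex.exp_zero, mul_one]
  rw [← mul_sub, ← sum_sub_distrib, norm_mul, norm_inv, Complex.norm_natCast]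
  calc _ ≤ (N : ℝ)⁻¹ * ∑ n ∈ Icc 1 N, rpowIncrement β n * (2 * π * |ξ| * N) := by
        gcongr
        exact (norm_sum_le _ _).trans (sum_le_sum hterm)
    _ = (N : ℝ) ^ β / β * (2 * π * |ξ|) := by
        rw [← sum_mul, sum_rpowIncrement hβ0.ne']
        field_simp
    _ ≤ 2 * N * (2 * π * |ξ|) := by gcongr
    _ = 4 * π * (N * |ξ|) := by ring

theorem norm_Mhat_zero_sub_Mhat_zero_two_mul_le {β : ℝ} (hβ : 1 / 2 ≤ β) (hβ1 : β ≤ 1)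
    {N : ℕ} (hN : N ≠ 0) :
    ‖Mhat β N 0 - Mhat β (2 * N) 0‖ ≤ 2 * ((1 - β) * (N : ℝ) ^ (β - 1)) := by
  have hβ0 : 0 < β := by linarith
  have hx : 0 ≤ (N : ℝ) ^ (β - 1) := rpow_nonneg N.cast_nonneg _
  have hlow := one_add_le_two_rpow (t := β - 1) (by linarith)
  have hup : (2 : ℝ) ^ (β - 1) ≤ 1 := rpow_le_one_of_one_le_of_nonpos one_le_two (by linarith)
  have hdiff : Mhat β N 0 - Mhat β (2 * N) 0
      = (((N : ℝ) ^ (β - 1) * (1 - 2 ^ (β - 1)) / β : ℝ) : ℂ) := by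
    rw [Mhat_zero hβ0.ne' hN, Mhat_zero hβ0.ne' (by omega), Nat.cast_mul, Nat.cast_ofNat,
      mul_rpow two_pos.le N.cast_nonneg]
    push_cast
    ring
  rw [hdiff, Complex.norm_real, Real.norm_eq_abs,
    abs_of_nonneg (div_nonneg (mul_nonneg hx (sub_nonneg.2 hup)) hβ0.le), div_le_iff₀ hβ0]
  nlinarith [mul_le_mul_of_nonneg_left (show 1 - (2 : ℝ) ^ (β - 1) ≤ 1 - β by linarith) hx,
    mul_nonneg (mul_nonneg hx (sub_nonneg.2 hβ1)) (show (0 : ℝ) ≤ 2 * β - 1 by linarith)]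

theorem min_inv_self_of_le_one {t : ℝ} (ht0 : 0 ≤ t) (ht1 : t ≤ 1) : min t⁻¹ t = t := by
  rcases ht0.eq_or_lt with rfl | ht
  · simp
  · exact min_eq_right (ht1.trans ((one_le_inv₀ ht).2 ht1))

theorem min_inv_self_of_one_lt {t : ℝ} (ht : 1 < t) : min t⁻¹ t = t⁻¹ :=
  min_eq_left ((inv_lt_one_of_one_lt₀ ht).trans ht).le

/-- When `ξ = 0`, Lean's `0⁻¹ = 0` makes the minimum `N|ξ| = 0`, as the convention
`(N|ξ|)⁻¹ = ∞` does. -/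
theorem stmt_10 :
    ∃ C : ℝ, 0 < C ∧
      ∀ (N : ℕ), 1 ≤ N →
        ∀ (β : ℝ), 1 / 2 ≤ β → β ≤ 1 →
          ∀ (ξ : ℝ), ξ ∈ Set.Icc (-(1 / 2) : ℝ) (1 / 2) →
            ‖Mhat β N ξ - Mhat β (2 * N) ξ‖ ≤
              C * (min (((N : ℝ) * |ξ|)⁻¹) ((N : ℝ) * |ξ|) + (1 - β) * (N : ℝ) ^ (β - 1)) := by
  refine ⟨48, by norm_num, fun N hN β hβ hβ1 ξ hξ => ?_⟩
  have hξ' : |ξ| ≤ 1 / 2 := abs_le.2 hξ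
  have hu : 0 ≤ (1 - β) * (N : ℝ) ^ (β - 1) :=
    mul_nonneg (by linarith) (rpow_nonneg N.cast_nonneg _)
  rcases le_or_gt ((N : ℝ) * |ξ|) 1 with hsmall | hlarge
  · rw [min_inv_self_of_le_one (by positivity) hsmall]
    have hMN := norm_Mhat_sub_Mhat_zero_le hβ hβ1 N ξ
    have hM2N := norm_Mhat_sub_Mhat_zero_le hβ hβ1 (2 * N) ξ
    have hM0 := norm_Mhat_zero_sub_Mhat_zero_two_mul_le hβ hβ1 (by omega : N ≠ 0)
    push_cast at hM2N
    calc _ ≤ ‖Mhat β N ξ - Mhat β N 0‖ + ‖Mhat β N 0 - Mhat β (2 * N) ξ‖ :=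
          norm_sub_le_norm_sub_add_norm_sub _ _ _
      _ ≤ ‖Mhat β N ξ - Mhat β N 0‖ + (‖Mhat β N 0 - Mhat β (2 * N) 0‖
          + ‖Mhat β (2 * N) ξ - Mhat β (2 * N) 0‖) := by
          rw [norm_sub_rev (Mhat β (2 * N) ξ)]
          gcongr
          exact norm_sub_le_norm_sub_add_norm_sub _ _ _
      _ ≤ 48 * ((N : ℝ) * |ξ| + (1 - β) * (N : ℝ) ^ (β - 1)) := by
          nlinarith [mul_le_mul_of_nonneg_right pi_le_four (by positivity : 0 ≤ (N : ℝ) * |ξ|)]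
  · have hξ0 : ξ ≠ 0 := by rintro rfl; norm_num at hlarge
    rw [min_inv_self_of_one_lt hlarge]
    have hMN := norm_Mhat_le hβ hβ1 hξ0 hξ' N
    have hM2N := norm_Mhat_le hβ hβ1 hξ0 hξ' (2 * N)
    have h2N : (((2 * N : ℕ) : ℝ) * |ξ|)⁻¹ ≤ ((N : ℝ) * |ξ|)⁻¹ := by
      gcongr
      omega
    calc _ ≤ ‖Mhat β N ξ‖ + ‖Mhat β (2 * N) ξ‖ := norm_sub_le _ _
      _ ≤ 48 * (((N : ℝ) * |ξ|)⁻¹ + (1 - β) * (N : ℝ) ^ (β - 1)) := by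
          nlinarith [inv_pos.2 (zero_lt_one.trans hlarge)]
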